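/- For L > 0 and 0 < a ≤ b, the identity ∫_0^L si(ax)·si(bx) dx = π/(2b) + si(aL)·si(bL)·L - ((b-a)/(2ab))·si((b-a)L) - ((b+a)/(2ab))·si((b+a)L) + (cos(aL)/a)·si(bL) + (cos(bL)/b)·si(aL) holds, where si(x) = -∫_x^∞ (sin t)/t dt and si(0) = π/2. -/

import Mathlib

/-!
Put `siExt x = ∫_0^x sinc - π/2`. Dirichlet's integral `∫_0^∞ sin t / t dt = π/2` shows that
`siExt x = si x` for `x > 0`; it comes from Fubini for `e^{-st} sin t` on `(0,∞) × (0,L]`,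
which turns `∫_0^L sin t / t dt` into `∫_0^∞ (1 - e^{-sL}(cos L + s sin L)) / (1 + s²) ds`,
and dominated convergence as `L → ∞`.

The identity is then the fundamental theorem of calculus: with `si` replaced by `siExt`, the
right-hand side without its constant `π/(2b)` is a function of `L` with derivative
`siExt (aL) siExt (bL)`, because `siExt' = sinc` and
`sin ((b ± a)x) = sin bx cos ax ± cos bx sin ax`, and its value at `L = 0` is
`siExt 0 / b = -π/(2b)`.
-/

open Real Filter MeasureTheory Set intervalIntegral Topology

lemma integral_sin_div_eq_integral_sinc (a b : ℝ) :
    ∫ t in a..b, sin t / t = ∫ t in a..b, sinc t :=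
  integral_congr_ae <| (volume.ae_ne 0).mono fun _ ht _ => (sinc_of_ne_zero ht).symm

lemma hasDerivAt_exp_neg_mul_mul_sin_primitive (s t : ℝ) :
    HasDerivAt (fun t => -exp (-(s * t)) * (cos t + s * sin t) / (1 + s ^ 2))
      (exp (-(s * t)) * sin t) t := by
  have hexp : HasDerivAt (fun t => exp (-(s * t))) (-s * exp (-(s * t))) t := by
    simpa [mul_comm] using ((hasDerivAt_id t).const_mul s).neg.exp
  have htrig : HasDerivAt (fun t => cos t + s * sin t) (-sin t + s * cos t) t :=
    (hasDerivAt_cos t).add ((hasDerivAt_sin t).const_mul s)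
  refine ((hexp.fun_neg.fun_mul htrig).div_const (1 + s ^ 2)).congr_deriv ?_
  field_simp
  ring

noncomputable def dampedSinIntegral (L s : ℝ) : ℝ :=
  (1 - exp (-(s * L)) * (cos L + s * sin L)) / (1 + s ^ 2)

lemma integral_exp_neg_mul_mul_sin (s L : ℝ) :
    ∫ t in (0 : ℝ)..L, exp (-(s * t)) * sin t = dampedSinIntegral L s := by
  have hcont : Continuous fun t => exp (-(s * t)) * sin t := by fun_prop
  rw [integral_eq_sub_of_hasDerivAt (fun t _ => hasDerivAt_exp_neg_mul_mul_sin_primitive s t)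
    (hcont.intervalIntegrable _ _), dampedSinIntegral]
  simp only [mul_zero, neg_zero, exp_zero, sin_zero, cos_zero]
  ring

lemma integrableOn_Ioi_exp_neg_mul {t : ℝ} (ht : 0 < t) :
    IntegrableOn (fun s => exp (-(s * t))) (Ioi 0) := by
  simpa [mul_comm] using integrableOn_exp_mul_Ioi (neg_neg_of_pos ht) 0

lemma integral_Ioi_exp_neg_mul {t : ℝ} (ht : 0 < t) :
    ∫ s in Ioi (0 : ℝ), exp (-(s * t)) = t⁻¹ := by
  simpa [mul_comm] using integral_exp_mul_Ioi (neg_neg_of_pos ht) 0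

lemma integral_sinc_eq_integral_dampedSinIntegral {L : ℝ} (hL : 0 ≤ L) :
    ∫ t in (0 : ℝ)..L, sinc t = ∫ s in Ioi (0 : ℝ), dampedSinIntegral L s := by
  set μ := volume.restrict (Ioi (0 : ℝ))
  set ν := volume.restrict (Ioc (0 : ℝ) L)
  set f : ℝ → ℝ → ℝ := fun s t => exp (-(s * t)) * sin t
  have integral_norm_f : ∀ t ∈ Ioc (0 : ℝ) L, ∫ s, ‖f s t‖ ∂μ = |sinc t| := by
    intro t ht
    simp only [f, norm_mul, norm_eq_abs, abs_of_pos (exp_pos _)]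
    rw [MeasureTheory.integral_mul_const, integral_Ioi_exp_neg_mul ht.1,
      sinc_of_ne_zero ht.1.ne', abs_div, abs_of_pos ht.1, inv_mul_eq_div]
  have integral_f : ∀ t ∈ Ioc (0 : ℝ) L, ∫ s, f s t ∂μ = sinc t := by
    intro t ht
    rw [MeasureTheory.integral_mul_const, integral_Ioi_exp_neg_mul ht.1, sinc_of_ne_zero ht.1.ne',
      inv_mul_eq_div]
  have hf : Integrable (Function.uncurry f) (μ.prod ν) := by
    refine (integrable_prod_iff' (by fun_prop)).2 ⟨?_, ?_⟩
    · filter_upwards [ae_restrict_mem measurableSet_Ioc] with t ht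
      exact (integrableOn_Ioi_exp_neg_mul ht.1).mul_const (sin t)
    · refine Integrable.mono' (g := fun _ => 1) (integrableOn_const measure_Ioc_lt_top.ne) ?_ ?_
      · exact (by fun_prop : Continuous fun p : ℝ × ℝ => ‖f p.2 p.1‖).aestronglyMeasurable
          |>.integral_prod_right'
      · filter_upwards [ae_restrict_mem measurableSet_Ioc] with t ht
        simp only [Function.uncurry_apply_pair]
        rw [integral_norm_f t ht, norm_eq_abs, abs_abs]
        exact abs_sinc_le_one t
  calc ∫ t in (0 : ℝ)..L, sinc t = ∫ t, ∫ s, f s t ∂μ ∂ν := by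
        rw [integral_of_le hL]
        exact setIntegral_congr_fun measurableSet_Ioc fun t ht => (integral_f t ht).symm
    _ = ∫ s, ∫ t, f s t ∂ν ∂μ := (integral_integral_swap hf).symm
    _ = ∫ s in Ioi (0 : ℝ), dampedSinIntegral L s := by
        simp only [μ, ν, f, ← integral_of_le hL, integral_exp_neg_mul_mul_sin]

lemma abs_cos_add_mul_sin_le (s x : ℝ) : |cos x + s * sin x| ≤ 1 + s ^ 2 := by
  refine abs_le_of_sq_le_sq ?_ (by positivity)
  nlinarith [sq_nonneg (s * cos x - sin x), sin_sq_add_cos_sq x, sq_nonneg s]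

lemma tendsto_dampedSinIntegral_atTop {s : ℝ} (hs : 0 < s) :
    Tendsto (fun L => dampedSinIntegral L s) atTop (𝓝 (1 + s ^ 2)⁻¹) := by
  have hexp : Tendsto (fun L => exp (-(s * L))) atTop (𝓝 0) :=
    tendsto_exp_neg_atTop_nhds_zero.comp (tendsto_id.const_mul_atTop hs)
  have hdecay : Tendsto (fun L => exp (-(s * L)) * (cos L + s * sin L)) atTop (𝓝 0) := by
    refine squeeze_zero_norm (fun L => ?_) (by simpa using hexp.mul_const (1 + s ^ 2))
    rw [norm_mul, norm_eq_abs, norm_eq_abs, abs_of_pos (exp_pos _)]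
    exact mul_le_mul_of_nonneg_left (abs_cos_add_mul_sin_le s L) (exp_pos _).le
  simpa [dampedSinIntegral, div_eq_mul_inv] using (hdecay.const_sub 1).div_const (1 + s ^ 2)

lemma abs_dampedSinIntegral_le {s L : ℝ} (hs : 0 ≤ s) (hL : 1 ≤ L) :
    |dampedSinIntegral L s| ≤ (1 + s ^ 2)⁻¹ + exp (-s) := by
  have hpos : 0 < 1 + s ^ 2 := by positivity
  have hnum : |1 - exp (-(s * L)) * (cos L + s * sin L)| ≤ 1 + (1 + s ^ 2) * exp (-s) :=
    calc |1 - exp (-(s * L)) * (cos L + s * sin L)|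
        ≤ |1| + |exp (-(s * L)) * (cos L + s * sin L)| := abs_sub _ _
      _ ≤ 1 + exp (-s) * (1 + s ^ 2) := by
          rw [abs_one, abs_mul, abs_of_pos (exp_pos _)]
          gcongr
          · nlinarith
          · exact abs_cos_add_mul_sin_le s L
      _ = 1 + (1 + s ^ 2) * exp (-s) := by ring
  calc |dampedSinIntegral L s| ≤ (1 + (1 + s ^ 2) * exp (-s)) / (1 + s ^ 2) := by
        rw [dampedSinIntegral, abs_div, abs_of_pos hpos]; gcongr
    _ = (1 + s ^ 2)⁻¹ + exp (-s) := by field_simp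

lemma tendsto_integral_sinc_atTop :
    Tendsto (fun L => ∫ t in (0 : ℝ)..L, sinc t) atTop (𝓝 (π / 2)) := by
  have hlim : Tendsto (fun L => ∫ s in Ioi (0 : ℝ), dampedSinIntegral L s) atTop
      (𝓝 (∫ s in Ioi (0 : ℝ), (1 + s ^ 2)⁻¹)) := by
    refine tendsto_integral_filter_of_dominated_convergence (fun s => (1 + s ^ 2)⁻¹ + exp (-s))
      (Eventually.of_forall fun L => ?_) ?_ ?_ ?_
    · exact (by unfold dampedSinIntegral; fun_prop : Measurable _).aestronglyMeasurable
    · filter_upwards [eventually_ge_atTop 1] with L hL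
      filter_upwards [ae_restrict_mem measurableSet_Ioi] with s hs
      exact abs_dampedSinIntegral_le (le_of_lt hs) hL
    · exact integrable_inv_one_add_sq.integrableOn.add
        (by simpa using integrableOn_Ioi_exp_neg_mul one_pos)
    · filter_upwards [ae_restrict_mem measurableSet_Ioi] with s hs
      exact tendsto_dampedSinIntegral_atTop hs
  rw [integral_Ioi_inv_one_add_sq, arctan_zero, sub_zero] at hlim
  exact hlim.congr' <| (eventually_ge_atTop 0).mono fun L hL =>
    (integral_sinc_eq_integral_dampedSinIntegral hL).symm

noncomputable def siExt (x : ℝ) : ℝ := (∫ t in (0 : ℝ)..x, sinc t) - π / 2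

lemma hasDerivAt_siExt (x : ℝ) : HasDerivAt siExt (sinc x) x :=
  (continuous_sinc.integral_hasStrictDerivAt 0 x).hasDerivAt.sub_const _

lemma siExt_zero : siExt 0 = -(π / 2) := by simp [siExt]

lemma tendsto_integral_sin_div_atTop (x : ℝ) :
    Tendsto (fun L => ∫ t in x..L, sin t / t) atTop (𝓝 (-siExt x)) := by
  have hint : ∀ y z : ℝ, IntervalIntegrable sinc volume y z :=
    continuous_sinc.intervalIntegrable
  rw [show -siExt x = π / 2 - ∫ t in (0 : ℝ)..x, sinc t by rw [siExt, neg_sub]]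
  refine (tendsto_integral_sinc_atTop.sub_const _).congr fun L => ?_
  rw [integral_sin_div_eq_integral_sinc, integral_interval_sub_left (hint 0 L) (hint 0 x)]

section

variable {h : ℝ → ℝ}

noncomputable def siProductPrimitive (h : ℝ → ℝ) (a b x : ℝ) : ℝ :=
  x * h (a * x) * h (b * x) + cos (a * x) / a * h (b * x) + cos (b * x) / b * h (a * x)
    - (b + a) / (2 * a * b) * h ((b + a) * x) - (b - a) / (2 * a * b) * h ((b - a) * x)

lemma hasDerivAt_comp_const_mul_of_deriv_sinc (hh : ∀ x, HasDerivAt h (sinc x) x) (c : ℝ)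
    {x : ℝ} (hx : x ≠ 0) : HasDerivAt (fun x => h (c * x)) (sin (c * x) / x) x := by
  refine ((hh (c * x)).comp x ((hasDerivAt_id x).const_mul c)).congr_deriv ?_
  rcases eq_or_ne c 0 with rfl | hc
  · simp
  · rw [sinc_of_ne_zero (mul_ne_zero hc hx)]
    field_simp

lemma hasDerivAt_siProductPrimitive (hh : ∀ x, HasDerivAt h (sinc x) x) {a b x : ℝ}
    (ha : a ≠ 0) (hb : b ≠ 0) (hx : x ≠ 0) :
    HasDerivAt (siProductPrimitive h a b) (h (a * x) * h (b * x)) x := by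
  have hcos := fun c : ℝ => ((hasDerivAt_id' x).const_mul c).cos
  have hA := hasDerivAt_comp_const_mul_of_deriv_sinc hh a hx
  have hB := hasDerivAt_comp_const_mul_of_deriv_sinc hh b hx
  refine (((((((hasDerivAt_id' x).fun_mul hA).fun_mul hB).fun_add
    (((hcos a).div_const a).fun_mul hB)).fun_add (((hcos b).div_const b).fun_mul hA)).fun_sub
    ((hasDerivAt_comp_const_mul_of_deriv_sinc hh (b + a) hx).const_mul _)).fun_sub
    ((hasDerivAt_comp_const_mul_of_deriv_sinc hh (b - a) hx).const_mul _)).congr_deriv ?_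
  rw [add_mul b a x, sub_mul b a x, sin_add, sin_sub]
  field_simp
  ring

lemma integral_comp_mul_mul_comp_mul (hh : ∀ x, HasDerivAt h (sinc x) x) {a b L : ℝ}
    (ha : a ≠ 0) (hb : b ≠ 0) (hL : 0 ≤ L) :
    ∫ x in (0 : ℝ)..L, h (a * x) * h (b * x) = siProductPrimitive h a b L - h 0 / b := by
  have hcont : Continuous h := continuous_iff_continuousAt.2 fun x => (hh x).continuousAt
  have hF : Continuous (siProductPrimitive h a b) := by unfold siProductPrimitive; fun_prop
  have hf : Continuous fun x => h (a * x) * h (b * x) := by fun_prop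
  rw [integral_eq_sub_of_hasDerivAt_of_le hL hF.continuousOn
    (fun x hx => hasDerivAt_siProductPrimitive hh ha hb hx.1.ne') (hf.intervalIntegrable _ _)]
  congr 1
  simp only [siProductPrimitive, mul_zero, zero_mul, cos_zero]
  field_simp
  ring

end

theorem stmt6_general (si : ℝ → ℝ)
    (hsi : ∀ x : ℝ, 0 < x →
      Tendsto (fun L => ∫ t in x..L, Real.sin t / t) atTop (nhds (-(si x))))
    (a b L : ℝ) (ha : 0 < a) (hab : a ≤ b) (hL : 0 < L) :
    ∫ x in (0:ℝ)..L, si (a * x) * si (b * x)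
      = π / (2 * b) + si (a * L) * si (b * L) * L
        - ((b - a) / (2 * a * b)) * si ((b - a) * L)
        - ((b + a) / (2 * a * b)) * si ((b + a) * L)
        + (Real.cos (a * L) / a) * si (b * L)
        + (Real.cos (b * L) / b) * si (a * L) := by
  have hb : 0 < b := ha.trans_le hab
  have si_eq : ∀ x, 0 < x → si x = siExt x := fun x hx =>
    neg_inj.1 (tendsto_nhds_unique (hsi x hx) (tendsto_integral_sin_div_atTop x))
  have hint : ∫ x in (0 : ℝ)..L, si (a * x) * si (b * x)
      = ∫ x in (0 : ℝ)..L, siExt (a * x) * siExt (b * x) := by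
    refine integral_congr_ae (ae_of_all _ fun x hx => ?_)
    rw [uIoc_of_le hL.le] at hx
    rw [si_eq _ (mul_pos ha hx.1), si_eq _ (mul_pos hb hx.1)]
  rw [hint, integral_comp_mul_mul_comp_mul hasDerivAt_siExt ha.ne' hb.ne' hL.le, siExt_zero,
    siProductPrimitive, si_eq _ (mul_pos ha hL), si_eq _ (mul_pos hb hL),
    si_eq _ (mul_pos (add_pos hb ha) hL)]
  rcases hab.eq_or_lt with rfl | hlt
  · simp only [sub_self, zero_div, zero_mul]
    ring
  · rw [si_eq _ (mul_pos (sub_pos.2 hlt) hL)]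
    ring

/-- The finite-range identity for `∫_0^L si(ax)·si(bx) dx`, with
`si x = -∫_x^∞ (sin t)/t dt` and `si 0 = π/2`.  (When `a = b` the coefficient
`(b-a)/(2ab)` vanishes, so the `si((b-a)L)` term causes no trouble.) -/
theorem stmt6 (si : ℝ → ℝ)
    (hsi : ∀ x : ℝ, 0 < x →
      Tendsto (fun L => ∫ t in x..L, Real.sin t / t) atTop (nhds (-(si x))))
    (hsi0 : si 0 = π / 2)
    (a b L : ℝ) (ha : 0 < a) (hab : a ≤ b) (hL : 0 < L) :
    ∫ x in (0:ℝ)..L, si (a * x) * si (b * x)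
      = π / (2 * b) + si (a * L) * si (b * L) * L
        - ((b - a) / (2 * a * b)) * si ((b - a) * L)
        - ((b + a) / (2 * a * b)) * si ((b + a) * L)
        + (Real.cos (a * L) / a) * si (b * L)
        + (Real.cos (b * L) / b) * si (a * L) :=
  stmt6_general si hsi a b L ha hab hL
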